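/- Let G be a vertex-minimal graph with no odd 4-coloring, mad(G) < 22/9, and no induced 5-cycle. Then G has no vertex of odd degree that is adjacent to a 2-thread, i.e., there is no path u v1 v2 w in G where d(v1) = d(v2) = 2 and d(u) is odd. -/
import Mathlib


/-- A proper `c`-coloring in which every vertex with a neighbor has some color
appearing an odd number of times on its neighborhood. -/
def IsOddColoring {V : Type*} {c : ℕ} (G : SimpleGraph V) (φ : V → Fin c) : Prop :=
  (∀ ⦃u v⦄, G.Adj u v → φ u ≠ φ v) ∧
  ∀ v : V, (G.neighborSet v).Nonempty →
    ∃ k : Fin c, Odd {u | G.Adj v u ∧ φ u = k}.ncard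

/-- `G` has an odd `c`-coloring. -/
def HasOddColoring {V : Type*} (G : SimpleGraph V) (c : ℕ) : Prop :=
  ∃ φ : V → Fin c, IsOddColoring G φ

/-- `mad(G) ≤ r`: every non-empty subgraph has average degree at most `r`. -/
def MadLE {V : Type*} (G : SimpleGraph V) (r : ℚ) : Prop :=
  ∀ H : G.Subgraph, H.verts.Nonempty →
    (2 * H.edgeSet.ncard : ℚ) ≤ r * H.verts.ncard

/-- `mad(G) < r`: every non-empty subgraph has average degree less than `r`. -/
def MadLT {V : Type*} (G : SimpleGraph V) (r : ℚ) : Prop :=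
  ∀ H : G.Subgraph, H.verts.Nonempty →
    (2 * H.edgeSet.ncard : ℚ) < r * H.verts.ncard

/-- `G` has no induced 5-cycle. -/
def NoInducedC5 {V : Type*} (G : SimpleGraph V) : Prop :=
  ¬ ∃ f : Fin 5 → V, Function.Injective f ∧
      ∀ a b, G.Adj (f a) (f b) ↔ (SimpleGraph.cycleGraph 5).Adj a b

/-- `G` is a vertex-minimal counterexample: `G` has no odd 4-coloring, satisfies
`mad(G) < 22/9` and has no induced 5-cycle, while every graph on fewer vertices
satisfying the same sparsity hypotheses has an odd 4-coloring. -/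
def MinimalCounterexample {V : Type} [Fintype V] (G : SimpleGraph V) : Prop :=
  ¬ HasOddColoring G 4 ∧ MadLT G (22 / 9) ∧ NoInducedC5 G ∧
    ∀ (W : Type) [Fintype W] (H : SimpleGraph W), Fintype.card W < Fintype.card V →
      MadLT H (22 / 9) → NoInducedC5 H → HasOddColoring H 4

lemma subgraph_edgeSet_map {V W : Type*} {G : SimpleGraph V} {G' : SimpleGraph W}
    (f : G →g G') (H : G.Subgraph) :
    (H.map f).edgeSet = Sym2.map f '' H.edgeSet := by
  ext e
  induction e with
  | h a b =>
    simp only [SimpleGraph.Subgraph.mem_edgeSet, SimpleGraph.Subgraph.map_adj, Relation.Map,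
      Set.mem_image]
    constructor
    · rintro ⟨x, y, h, rfl, rfl⟩
      exact ⟨s(x, y), by simpa using h, rfl⟩
    · rintro ⟨e', he', hmap⟩
      induction e' with
      | h x y =>
        simp only [Sym2.map_pair_eq, Sym2.eq_iff] at hmap
        rcases hmap with ⟨rfl, rfl⟩ | ⟨rfl, rfl⟩
        · exact ⟨x, y, by simpa using he', rfl, rfl⟩
        · exact ⟨y, x, (by simpa using he' : H.Adj x y).symm, rfl, rfl⟩

lemma madLT_induce {V : Type*} {G : SimpleGraph V} {r : ℚ} (h : MadLT G r) (s : Set V) :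
    MadLT (G.induce s) r := by
  intro H hne
  have hinj : Function.Injective ((SimpleGraph.Embedding.induce s (G := G)).toHom : s → V) :=
    (SimpleGraph.Embedding.induce s (G := G)).injective
  have h1 := h (H.map (SimpleGraph.Embedding.induce s (G := G)).toHom) (hne.image _)
  rwa [SimpleGraph.Subgraph.map_verts, subgraph_edgeSet_map,
    Set.ncard_image_of_injective _ hinj,
    Set.ncard_image_of_injective _ (Sym2.map.injective hinj)] at h1

lemma noInducedC5_induce {V : Type*} {G : SimpleGraph V} (h : NoInducedC5 G) (s : Set V) :
    NoInducedC5 (G.induce s) := by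
  rintro ⟨f, hf, hadj⟩
  exact h ⟨fun a => (f a : V), Subtype.coe_injective.comp hf, fun a b => hadj a b⟩

lemma fin4_exists_ne : ∀ a b c : Fin 4, ∃ d : Fin 4, d ≠ a ∧ d ≠ b ∧ d ≠ c := by decide

/-- In a vertex-minimal counterexample, no vertex of odd degree is adjacent to a
2-thread: there is no path `u v₁ v₂ w` with `d(v₁) = d(v₂) = 2` and `d(u)` odd. -/
theorem stmt_17 {V : Type} [Fintype V] (G : SimpleGraph V)
    (hG : MinimalCounterexample G) :
    ¬ ∃ u v₁ v₂ w : V, G.Adj u v₁ ∧ G.Adj v₁ v₂ ∧ G.Adj v₂ w ∧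
        u ≠ v₂ ∧ v₁ ≠ w ∧ u ≠ w ∧
        (G.neighborSet v₁).ncard = 2 ∧ (G.neighborSet v₂).ncard = 2 ∧
        Odd (G.neighborSet u).ncard := by
  classical
  rintro ⟨u, v₁, v₂, w, huv₁, hv₁v₂, hv₂w, huv₂, hv₁w, huw, hd₁, hd₂, hdu⟩
  obtain ⟨hnc, hmad, hc5, hmin⟩ := hG
  -- neighborhoods of the two degree-2 vertices
  have N₁ : ({u, v₂} : Set V) = G.neighborSet v₁ := by
    refine Set.eq_of_subset_of_ncard_le ?_ ?_ (Set.toFinite _)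
    · rintro x (rfl | rfl)
      · exact huv₁.symm
      · exact hv₁v₂
    · rw [hd₁, Set.ncard_pair huv₂]
  have N₂ : ({v₁, w} : Set V) = G.neighborSet v₂ := by
    refine Set.eq_of_subset_of_ncard_le ?_ ?_ (Set.toFinite _)
    · rintro x (rfl | rfl)
      · exact hv₁v₂.symm
      · exact hv₂w
    · rw [hd₂, Set.ncard_pair hv₁w]
  have hnb₁ : ∀ x, G.Adj v₁ x → x = u ∨ x = v₂ := by
    intro x hx
    have : x ∈ ({u, v₂} : Set V) := N₁ ▸ hx
    simpa using this
  have hnb₂ : ∀ x, G.Adj v₂ x → x = v₁ ∨ x = w := by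
    intro x hx
    have : x ∈ ({v₁, w} : Set V) := N₂ ▸ hx
    simpa using this
  have hnadj₁w : ¬ G.Adj v₁ w := by
    intro h
    rcases hnb₁ w h with rfl | rfl
    · exact huw rfl
    · exact hv₂w.ne rfl
  have hnadj₂u : ¬ G.Adj v₂ u := by
    intro h
    rcases hnb₂ u h with rfl | rfl
    · exact huv₁.ne rfl
    · exact huw rfl
  -- the smaller graph
  set S : Set V := {x | x ≠ v₁ ∧ x ≠ v₂} with hS
  have hv₁S : v₁ ∉ S := fun h => h.1 rfl
  have hv₂S : v₂ ∉ S := fun h => h.2 rfl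
  have huS : u ∈ S := ⟨huv₁.ne, huv₂⟩
  have hwS : w ∈ S := ⟨Ne.symm hv₁w, hv₂w.ne'⟩
  have hnotS : ∀ x, x ∉ S → x = v₁ ∨ x = v₂ := by
    intro x hx
    by_contra hc
    push_neg at hc
    exact hx ⟨hc.1, hc.2⟩
  have hcard : Fintype.card S < Fintype.card V := by
    have := Finite.card_subtype_lt (p := fun x => x ∈ S) (x := v₁) hv₁S
    simpa [Nat.card_eq_fintype_card] using this
  obtain ⟨φ, hφprop, hφodd⟩ :=
    hmin S (G.induce S) hcard (madLT_induce hmad S) (noInducedC5_induce hc5 S)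
  set uS : S := ⟨u, huS⟩
  set wS : S := ⟨w, hwS⟩
  -- a color appearing oddly on w's neighborhood in the small graph (if any)
  obtain ⟨kw, hkw⟩ : ∃ kw : Fin 4, ((G.induce S).neighborSet wS).Nonempty →
      Odd {y | (G.induce S).Adj wS y ∧ φ y = kw}.ncard := by
    by_cases h : ((G.induce S).neighborSet wS).Nonempty
    · obtain ⟨k, hk⟩ := hφodd wS h
      exact ⟨k, fun _ => hk⟩
    · exact ⟨0, fun h' => absurd h' h⟩
  obtain ⟨c₂, hc₂u, hc₂w, hc₂k⟩ := fin4_exists_ne (φ uS) (φ wS) kw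
  obtain ⟨c₁, hc₁u, hc₁₂, hc₁w⟩ := fin4_exists_ne (φ uS) c₂ (φ wS)
  -- the extended coloring
  set φ' : V → Fin 4 := fun x => if h : x ∈ S then φ ⟨x, h⟩ else if x = v₁ then c₁ else c₂
    with hφ'
  have hφ'S : ∀ x (hx : x ∈ S), φ' x = φ ⟨x, hx⟩ := by
    intro x hx; simp [hφ', hx]
  have hφ'v₁ : φ' v₁ = c₁ := by simp [hφ', hv₁S]
  have hφ'v₂ : φ' v₂ = c₂ := by simp [hφ', hv₂S, hv₁v₂.ne']
  -- properness
  have hadjS : ∀ (a b : V) (ha : a ∈ S) (hb : b ∈ S),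
      G.Adj a b → (G.induce S).Adj ⟨a, ha⟩ ⟨b, hb⟩ := fun a b ha hb hab => hab
  have hprop : ∀ ⦃a b⦄, G.Adj a b → φ' a ≠ φ' b := by
    have key : ∀ a b, G.Adj a b → a ∈ S → b ∉ S → φ' a ≠ φ' b := by
      intro a b hab ha hb
      rcases hnotS b hb with rfl | rfl
      · rcases hnb₁ a hab.symm with rfl | rfl
        · rw [hφ'S a ha, hφ'v₁]
          exact Ne.symm hc₁u
        · exact absurd ha hv₂S
      · rcases hnb₂ a hab.symm with rfl | rfl
        · exact absurd ha hv₁S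
        · rw [hφ'S a ha, hφ'v₂]
          exact Ne.symm hc₂w
    intro a b hab
    by_cases ha : a ∈ S <;> by_cases hb : b ∈ S
    · rw [hφ'S a ha, hφ'S b hb]
      exact hφprop (hadjS a b ha hb hab)
    · exact key a b hab ha hb
    · exact (key b a hab.symm hb ha).symm
    · rcases hnotS a ha with rfl | rfl <;> rcases hnotS b hb with rfl | rfl
      · exact absurd hab (G.irrefl)
      · rw [hφ'v₁, hφ'v₂]; exact hc₁₂
      · rw [hφ'v₁, hφ'v₂]; exact Ne.symm hc₁₂
      · exact absurd hab (G.irrefl)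
  -- transferring color classes between the graphs
  have himg : ∀ (x : V) (hx : x ∈ S) (k : Fin 4),
      (∀ y, G.Adj x y → φ' y = k → y ∈ S) →
      {y | G.Adj x y ∧ φ' y = k} =
        Subtype.val '' {y | (G.induce S).Adj ⟨x, hx⟩ y ∧ φ y = k} := by
    intro x hx k hsub
    ext y
    constructor
    · rintro ⟨hy1, hy2⟩
      have hyS : y ∈ S := hsub y hy1 hy2
      exact ⟨⟨y, hyS⟩, ⟨hadjS x y hx hyS hy1, ((hφ'S y hyS).symm.trans hy2)⟩, rfl⟩
    · rintro ⟨⟨y, hyS⟩, ⟨hadj, hcol⟩, rfl⟩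
      exact ⟨hadj, (hφ'S y hyS).trans hcol⟩
  -- the extended coloring is an odd coloring, contradiction
  apply hnc
  refine ⟨φ', hprop, ?_⟩
  intro x hxne
  by_cases hx₁ : x = v₁
  · rw [hx₁]
    refine ⟨φ' u, ?_⟩
    have : {y | G.Adj v₁ y ∧ φ' y = φ' u} = {u} := by
      ext y
      simp only [Set.mem_setOf_eq, Set.mem_singleton_iff]
      constructor
      · rintro ⟨hadj, hcol⟩
        rcases hnb₁ y hadj with rfl | rfl
        · rfl
        · rw [hφ'v₂, hφ'S u huS] at hcol
          exact absurd hcol hc₂u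
      · rintro rfl
        exact ⟨huv₁.symm, rfl⟩
    rw [this, Set.ncard_singleton]
    exact odd_one
  by_cases hx₂ : x = v₂
  · rw [hx₂]
    refine ⟨φ' v₁, ?_⟩
    have : {y | G.Adj v₂ y ∧ φ' y = φ' v₁} = {v₁} := by
      ext y
      simp only [Set.mem_setOf_eq, Set.mem_singleton_iff]
      constructor
      · rintro ⟨hadj, hcol⟩
        rcases hnb₂ y hadj with h | h
        · exact h
        · rw [h, hφ'v₁, hφ'S w hwS] at hcol
          exact absurd hcol hc₁w.symm
      · rintro rfl
        exact ⟨hv₁v₂.symm, rfl⟩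
    rw [this, Set.ncard_singleton]
    exact odd_one
  by_cases hxu : x = u
  · rw [hxu]
    -- parity argument: u has odd degree
    by_contra hcon
    push_neg at hcon
    have heven : ∀ k : Fin 4, Even {y | G.Adj u y ∧ φ' y = k}.ncard := fun k =>
      Nat.not_odd_iff_even.mp (hcon k)
    have hsetN : G.neighborSet u = ↑(G.neighborFinset u) := by
      ext y; simp [SimpleGraph.mem_neighborFinset]
    have hsetk : ∀ k : Fin 4, {y | G.Adj u y ∧ φ' y = k} =
        ↑((G.neighborFinset u).filter (fun y => φ' y = k)) := by
      intro k; ext y; simp [SimpleGraph.mem_neighborFinset]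
    have hfib : (G.neighborFinset u).card =
        ∑ k : Fin 4, ((G.neighborFinset u).filter (fun y => φ' y = k)).card :=
      Finset.card_eq_sum_card_fiberwise (fun x _ => Finset.mem_univ _)
    have hOdd : Odd (G.neighborFinset u).card := by
      rwa [hsetN, Set.ncard_coe_finset] at hdu
    have hEven : Even (G.neighborFinset u).card := by
      rw [hfib]
      refine Finset.even_sum _ (fun k _ => ?_)
      have := heven k
      rwa [hsetk k, Set.ncard_coe_finset] at this
    exact (Nat.not_even_iff_odd.mpr hOdd) hEven
  by_cases hxw : x = w
  · rw [hxw]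
    by_cases hnw : ((G.induce S).neighborSet wS).Nonempty
    · refine ⟨kw, ?_⟩
      have hsub : ∀ y, G.Adj w y → φ' y = kw → y ∈ S := by
        intro y hadj hcol
        constructor
        · rintro rfl
          exact hnadj₁w hadj.symm
        · rintro rfl
          rw [hφ'v₂] at hcol
          exact hc₂k hcol
      rw [himg w hwS kw hsub, Set.ncard_image_of_injective _ Subtype.coe_injective]
      exact hkw hnw
    · refine ⟨c₂, ?_⟩
      have : {y | G.Adj w y ∧ φ' y = c₂} = {v₂} := by
        ext y
        simp only [Set.mem_setOf_eq, Set.mem_singleton_iff]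
        constructor
        · rintro ⟨hadj, hcol⟩
          by_cases hyS : y ∈ S
          · exact absurd ⟨⟨y, hyS⟩, hadjS w y hwS hyS hadj⟩ hnw
          · rcases hnotS y hyS with rfl | rfl
            · exact absurd hadj.symm hnadj₁w
            · rfl
        · rintro rfl
          exact ⟨hv₂w.symm, hφ'v₂⟩
      rw [this, Set.ncard_singleton]
      exact odd_one
  · -- generic vertex: neighborhood unchanged
    have hxS : x ∈ S := ⟨hx₁, hx₂⟩
    have hsub : ∀ y, G.Adj x y → y ∈ S := by
      intro y hadj
      constructor
      · rintro rfl
        rcases hnb₁ x hadj.symm with rfl | rfl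
        · exact hxu rfl
        · exact hx₂ rfl
      · rintro rfl
        rcases hnb₂ x hadj.symm with rfl | rfl
        · exact hx₁ rfl
        · exact hxw rfl
    obtain ⟨y, hy⟩ := hxne
    have hyS : y ∈ S := hsub y hy
    obtain ⟨k, hk⟩ := hφodd ⟨x, hxS⟩ ⟨⟨y, hyS⟩, hadjS x y hxS hyS hy⟩
    refine ⟨k, ?_⟩
    rw [himg x hxS k (fun y hy _ => hsub y hy),
      Set.ncard_image_of_injective _ Subtype.coe_injective]
    exact hk
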